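/- arXiv:2208.01680 — 3 statements merged into one kernel-verified Lean document; each statement's English description precedes it below -/
import Mathlib

section
/- If among the three gap lengths all three occur, then the largest gap length equals the sum of the two smaller gap lengths. -/
/-- The cyclic gap after the point `{m α}` among the points `{0α}, …, {(N-1)α}` on ℝ/ℤ:
the infimum of positive circular distances from `{m α}` to the other points. -/
noncomputable def gapAt (α : ℝ) (N : ℕ) (m : ℕ) : ℝ :=
  sInf {d : ℝ | 0 < d ∧ ∃ m' : ℕ, m' < N ∧ Int.fract ((m' : ℝ) * α - (m : ℝ) * α) = d}

open Classical in
/-- The set of distinct cyclic gap lengths of the configuration `{0α}, …, {(N-1)α}`. -/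
noncomputable def gapSet (α : ℝ) (N : ℕ) : Finset ℝ :=
  (Finset.range N).image (gapAt α N)

/-- The multiset of cyclic gaps of the configuration `{0α}, …, {(N-1)α}`. -/
noncomputable def gapMult (α : ℝ) (N : ℕ) : Multiset ℝ :=
  (Multiset.range N).map (gapAt α N)

/-- Cyclic extension of the ordering permutation `u` to integer indices, mod `N`. -/
def uc (N : ℕ) (u : ℕ → ℕ) (j : ℤ) : ℕ := u ((j % (N : ℤ)).toNat)

/-
Let `a ∈ [1, N)` minimise `{kα}` and `b ∈ [1, N)` maximise it, and put `g₁ = {aα}`,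
`g₂ = 1 - {bα}`. From `{mα}` the step `+a` lands at distance `g₁` when `m + a < N`, the step
`-b` at distance `g₂` when `b ≤ m`, and if neither is available the step `a - b` lands at
distance `g₁ + g₂`. Minimality of `a` and maximality of `b` rule out anything shorter, so every
gap lies in `{g₁, g₂, g₁ + g₂}`; three distinct gap lengths then force the largest to be `g₁ + g₂`.
-/

namespace Int

variable {R : Type*} [Ring R] [LinearOrder R] [IsStrictOrderedRing R] [FloorRing R] {x y : R}

theorem fract_sub_of_fract_le (h : fract y ≤ fract x) : fract (x - y) = fract x - fract y :=
  fract_eq_iff.mpr ⟨sub_nonneg.mpr h, (sub_le_self _ (fract_nonneg y)).trans_lt (fract_lt_one x),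
    ⌊x⌋ - ⌊y⌋, by simp only [fract, cast_sub]; abel⟩

theorem fract_sub_of_fract_lt (h : fract x < fract y) :
    fract (x - y) = fract x - fract y + 1 :=
  fract_eq_iff.mpr ⟨by
    rw [sub_add_eq_add_sub, add_sub_assoc]
    exact add_nonneg (fract_nonneg x) (sub_nonneg.mpr (fract_lt_one y).le),
    (add_lt_iff_neg_right 1).mpr (sub_neg.mpr h),
    ⌊x⌋ - ⌊y⌋ - 1, by simp only [fract, cast_sub, cast_one]; abel⟩

end Int

namespace Irrational

variable {α : ℝ}

theorem fract_intCast_mul_ne_zero (hα : Irrational α) {k : ℤ} (hk : k ≠ 0) :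
    Int.fract (k * α) ≠ 0 := by
  rw [Int.fract_ne_zero_iff]
  rintro ⟨z, hz⟩
  exact (hα.intCast_mul hk).ne_int z hz.symm

theorem fract_intCast_mul_pos (hα : Irrational α) {k : ℤ} (hk : k ≠ 0) :
    0 < Int.fract (k * α) :=
  (Int.fract_nonneg _).lt_of_ne' (hα.fract_intCast_mul_ne_zero hk)

theorem fract_intCast_mul_injective (hα : Irrational α) :
    Function.Injective fun k : ℤ => Int.fract (k * α) := by
  intro k l h
  obtain ⟨z, hz⟩ := Int.fract_eq_fract.mp h
  by_contra hkl
  exact (hα.intCast_mul (sub_ne_zero.mpr hkl)).ne_int z (by push_cast; linarith)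

theorem fract_neg_intCast_mul (hα : Irrational α) {k : ℤ} (hk : k ≠ 0) :
    Int.fract (((-k : ℤ) : ℝ) * α) = 1 - Int.fract (k * α) := by
  rw [Int.cast_neg, neg_mul, Int.fract_neg (hα.fract_intCast_mul_ne_zero hk)]

end Irrational

section Gaps

variable {α : ℝ} {N : ℕ} {a b : ℤ}

theorem gapAt_eq_of_forall_le (hα : Irrational α) {m : ℕ} {d : ℝ}
    (hd : ∃ j : ℤ, j ≠ 0 ∧ -(m : ℤ) ≤ j ∧ j < N - m ∧ Int.fract (j * α) = d)
    (hright : ∀ j : ℤ, 0 < j → j < N - m → d ≤ Int.fract (j * α))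
    (hleft : ∀ j : ℤ, -(m : ℤ) ≤ j → j < 0 → d ≤ Int.fract (j * α)) :
    gapAt α N m = d := by
  have hshift : ∀ m' : ℕ, Int.fract ((m' : ℝ) * α - m * α) = Int.fract (((m' - m : ℤ) : ℝ) * α) :=
    fun m' => by push_cast; ring_nf
  refine IsLeast.csInf_eq ⟨?_, ?_⟩
  · obtain ⟨j, hj0, hjm, hjN, rfl⟩ := hd
    refine ⟨hα.fract_intCast_mul_pos hj0, (m + j).toNat, by omega, ?_⟩
    rw [hshift, show ((m + j).toNat : ℤ) - m = j by omega]
  · rintro _ ⟨hpos, m', hm', rfl⟩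
    rw [hshift] at hpos ⊢
    rcases lt_trichotomy (m' : ℤ) m with h | h | h
    · exact hleft _ (by omega) (by omega)
    · simp [h] at hpos
    · exact hright _ (by omega) (by omega)

theorem Irrational.add_le_fract_of_lt_of_isMinOn (hα : Irrational α)
    (ha : IsMinOn (fun k : ℤ => Int.fract (k * α)) (Set.Ico 1 N) a)
    (hb : IsMaxOn (fun k : ℤ => Int.fract (k * α)) (Set.Ico 1 N) b)
    (haN : a < N) {k : ℤ} (hk : 1 ≤ k) (hka : k < a) :
    Int.fract (a * α) + (1 - Int.fract (b * α)) ≤ Int.fract (k * α) := by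
  have hlt : Int.fract (a * α) < Int.fract (k * α) :=
    (ha ⟨hk, by omega⟩).lt_of_ne fun h => hka.ne' (hα.fract_intCast_mul_injective h)
  have hsub : Int.fract (((a - k : ℤ) : ℝ) * α) = Int.fract (a * α) - Int.fract (k * α) + 1 := by
    rw [Int.cast_sub, sub_mul, Int.fract_sub_of_fract_lt hlt]
  have := hb (show a - k ∈ Set.Ico 1 (N : ℤ) from ⟨by omega, by omega⟩)
  simp only [Set.mem_ofPred_eq, hsub] at this
  linarith

theorem Irrational.add_le_one_sub_fract_of_lt_of_isMaxOn (hα : Irrational α)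
    (ha : IsMinOn (fun k : ℤ => Int.fract (k * α)) (Set.Ico 1 N) a)
    (hb : IsMaxOn (fun k : ℤ => Int.fract (k * α)) (Set.Ico 1 N) b)
    (hbN : b < N) {k : ℤ} (hk : 1 ≤ k) (hkb : k < b) :
    Int.fract (a * α) + (1 - Int.fract (b * α)) ≤ 1 - Int.fract (k * α) := by
  have hlt : Int.fract (k * α) < Int.fract (b * α) :=
    (hb ⟨hk, by omega⟩).lt_of_ne fun h => hkb.ne (hα.fract_intCast_mul_injective h)
  have hsub : Int.fract (((b - k : ℤ) : ℝ) * α) = Int.fract (b * α) - Int.fract (k * α) := by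
    rw [Int.cast_sub, sub_mul, Int.fract_sub_of_fract_le hlt.le]
  have := ha (show b - k ∈ Set.Ico 1 (N : ℤ) from ⟨by omega, by omega⟩)
  simp only [Set.mem_ofPred_eq, hsub] at this
  linarith

theorem Irrational.gapAt_mem (hα : Irrational α)
    (ha : IsMinOn (fun k : ℤ => Int.fract (k * α)) (Set.Ico 1 N) a) (ha_mem : a ∈ Set.Ico 1 (N : ℤ))
    (hb : IsMaxOn (fun k : ℤ => Int.fract (k * α)) (Set.Ico 1 N) b) (hb_mem : b ∈ Set.Ico 1 (N : ℤ))
    (hab : a ≠ b) {m : ℕ} (hm : m < N) :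
    gapAt α N m ∈ ({Int.fract (a * α), 1 - Int.fract (b * α),
      Int.fract (a * α) + (1 - Int.fract (b * α))} : Set ℝ) := by
  set g₁ := Int.fract (a * α)
  set g₂ := 1 - Int.fract (b * α)
  obtain ⟨ha₁, haN⟩ := ha_mem
  obtain ⟨hb₁, hbN⟩ := hb_mem
  have hg₂ : 0 < g₂ := sub_pos.mpr (Int.fract_lt_one _)
  have hfract_neg (j : ℤ) (hj : j < 0) :
      Int.fract (j * α) = 1 - Int.fract (((-j : ℤ) : ℝ) * α) := by
    simpa using hα.fract_neg_intCast_mul (k := -j) (by omega)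
  have hright (j : ℤ) (h₁ : 0 < j) (h₂ : j < N - m) : g₁ ≤ Int.fract (j * α) := ha ⟨h₁, by omega⟩
  have hright' (h : (N : ℤ) ≤ m + a) (j : ℤ) (h₁ : 0 < j) (h₂ : j < N - m) :
      g₁ + g₂ ≤ Int.fract (j * α) :=
    hα.add_le_fract_of_lt_of_isMinOn ha hb haN h₁ (by omega)
  have hleft (j : ℤ) (h₁ : -(m : ℤ) ≤ j) (h₂ : j < 0) : g₂ ≤ Int.fract (j * α) := by
    rw [hfract_neg j h₂]
    exact sub_le_sub_left (hb ⟨by omega, by omega⟩) 1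
  have hleft' (h : (m : ℤ) < b) (j : ℤ) (h₁ : -(m : ℤ) ≤ j) (h₂ : j < 0) :
      g₁ + g₂ ≤ Int.fract (j * α) := by
    rw [hfract_neg j h₂]
    exact hα.add_le_one_sub_fract_of_lt_of_isMaxOn ha hb hbN (by omega) (by omega)
  have hfract_neg_b : Int.fract (((-b : ℤ) : ℝ) * α) = g₂ := hα.fract_neg_intCast_mul (by omega)
  have hfract_sub : Int.fract (((a - b : ℤ) : ℝ) * α) = g₁ + g₂ := by
    have hlt : g₁ < Int.fract (b * α) :=
      (ha ⟨hb₁, hbN⟩).lt_of_ne fun h => hab (hα.fract_intCast_mul_injective h)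
    rw [Int.cast_sub, sub_mul, Int.fract_sub_of_fract_lt hlt]
    ring
  by_cases hA : (m : ℤ) + a < N <;> by_cases hB : b ≤ (m : ℤ)
  · rcases le_total g₁ g₂ with h | h
    · exact .inl <| gapAt_eq_of_forall_le hα ⟨a, by omega, by omega, by omega, rfl⟩ hright
        fun j h₁ h₂ => h.trans (hleft j h₁ h₂)
    · exact .inr <| .inl <|
        gapAt_eq_of_forall_le hα ⟨-b, by omega, by omega, by omega, hfract_neg_b⟩
          (fun j h₁ h₂ => h.trans (hright j h₁ h₂)) hleft
  · exact .inl <| gapAt_eq_of_forall_le hα ⟨a, by omega, by omega, by omega, rfl⟩ hright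
      fun j h₁ h₂ => (le_add_of_nonneg_right hg₂.le).trans (hleft' (by omega) j h₁ h₂)
  · exact .inr <| .inl <| gapAt_eq_of_forall_le hα ⟨-b, by omega, by omega, by omega, hfract_neg_b⟩
      (fun j h₁ h₂ =>
        (le_add_of_nonneg_left (Int.fract_nonneg _)).trans (hright' (by omega) j h₁ h₂))
      hleft
  · exact .inr <| .inr <| gapAt_eq_of_forall_le hα ⟨a - b, by omega, by omega, by omega, hfract_sub⟩
      (hright' (by omega)) (hleft' (by omega))

end Gaps

theorem card_gapSet_le (α : ℝ) (N : ℕ) : (gapSet α N).card ≤ N := by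
  classical
  exact Finset.card_image_le.trans (Finset.card_range N).le

theorem eq_add_of_mem_of_lt_of_lt {x y u v w : ℝ} (hx : 0 < x) (hy : 0 < y)
    (hu : u ∈ ({x, y, x + y} : Set ℝ)) (hv : v ∈ ({x, y, x + y} : Set ℝ))
    (hw : w ∈ ({x, y, x + y} : Set ℝ)) (huv : u < v) (hvw : v < w) : w = u + v := by
  rcases hu with rfl | rfl | rfl <;> rcases hv with rfl | rfl | rfl <;>
    rcases hw with rfl | rfl | rfl <;> linarith

theorem largest_gap_is_sum (α : ℝ) (hα : Irrational α) (N : ℕ)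
    (Δ₁ Δ₂ Δ₃ : ℝ) (h12 : Δ₁ < Δ₂) (h23 : Δ₂ < Δ₃)
    (hset : gapSet α N = {Δ₁, Δ₂, Δ₃}) :
    Δ₃ = Δ₁ + Δ₂ := by
  have hN : 3 ≤ N := by
    have hcard : ({Δ₁, Δ₂, Δ₃} : Finset ℝ).card = 3 :=
      Finset.card_eq_three.mpr ⟨_, _, _, h12.ne, (h12.trans h23).ne, h23.ne, rfl⟩
    simpa [hset, hcard] using card_gapSet_le α N
  have hfinite := Set.finite_Ico (1 : ℤ) N
  have hne : (Set.Ico (1 : ℤ) N).Nonempty := ⟨1, le_rfl, by omega⟩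
  obtain ⟨a, ha_mem, ha⟩ := Set.exists_min_image _ (fun k : ℤ => Int.fract (k * α)) hfinite hne
  obtain ⟨b, hb_mem, hb⟩ := Set.exists_max_image _ (fun k : ℤ => Int.fract (k * α)) hfinite hne
  have hab : a ≠ b := by
    rintro rfl
    have h₁ := le_antisymm (hb 1 ⟨le_rfl, by omega⟩) (ha 1 ⟨le_rfl, by omega⟩)
    have h₂ := le_antisymm (hb 2 ⟨by norm_num, by omega⟩) (ha 2 ⟨by norm_num, by omega⟩)
    exact absurd (hα.fract_intCast_mul_injective (h₁.trans h₂.symm)) (by norm_num)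
  have hgap (Δ : ℝ) (hΔ : Δ ∈ gapSet α N) : Δ ∈ ({Int.fract (a * α), 1 - Int.fract (b * α),
      Int.fract (a * α) + (1 - Int.fract (b * α))} : Set ℝ) := by
    obtain ⟨m, hm, rfl⟩ := Finset.mem_image.mp hΔ
    exact hα.gapAt_mem (isMinOn_iff.mpr ha) ha_mem (isMaxOn_iff.mpr hb) hb_mem hab
      (Finset.mem_range.mp hm)
  exact eq_add_of_mem_of_lt_of_lt (hα.fract_intCast_mul_pos (zero_lt_one.trans_le ha_mem.1).ne')
    (sub_pos.mpr (Int.fract_lt_one _)) (hgap _ (by simp [hset])) (hgap _ (by simp [hset]))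
    (hgap _ (by simp [hset])) h12 h23
end

section
/- Let u_0 = 0, u_1, ..., u_{N-1} be the permutation of {0,1,...,N-1} such that {u_0 α} < {u_1 α} < ... < {u_{N-1} α}. Then N is a relabeling time (i.e., there are only two distinct gap lengths) if and only if N = u_1 + u_{N-1}. -/
/-!
Let `a = u 1` and `b = u (N - 1)`, so that `{aα}` and `{bα}` are the points nearest to `0` on its
right and on its left. Translating by `mα`, the point following `{mα}` is `{(m + a)α}` if
`m + a < N`, `{(m - b)α}` if `b ≤ m`, and `{(m + a - b)α}` otherwise, at distances `{aα}`,
`1 - {bα}` and their sum (the three distance theorem). The extremality of `a` and `b` forces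
`N ≤ a + b`, and the third case occurs exactly when `N < a + b` (e.g. at `m = N - a`). The first
two distances differ, since `{aα} + {bα} = 1` would make `(a + b)α` an integer.
-/

open Int (fract)

namespace Int

variable {R : Type*} [CommRing R] [LinearOrder R] [IsStrictOrderedRing R] [FloorRing R]

theorem fract_add_eq_or (x y : R) :
    fract (x + y) = fract x + fract y ∨ fract (x + y) = fract x + fract y - 1 := by
  obtain ⟨z, hz⟩ := fract_add x y
  have hz0 : z ≤ 0 := mod_cast (by linarith [fract_add_le x y] : (z : R) ≤ 0)
  have hz1 : -1 ≤ z := mod_cast (by linarith [fract_add_fract_le x y] : (-1 : R) ≤ z)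
  obtain rfl | rfl : z = 0 ∨ z = -1 := by omega
  · left; push_cast at hz; linarith
  · right; push_cast at hz; linarith

theorem fract_sub_eq_of_lt {x y : R} (h : fract x < fract y) :
    fract (x - y) = fract x - fract y + 1 := by
  rcases fract_add_eq_or (x - y) y with h' | h' <;> rw [sub_add_cancel] at h'
  · linarith [fract_nonneg (x - y)]
  · linarith

end Int

open Int

theorem Irrational.fract_natCast_mul_pos {α : ℝ} (hα : Irrational α) {k : ℕ} (hk : k ≠ 0) :
    0 < fract (k * α) :=
  (fract_nonneg _).lt_of_ne' <| fract_ne_zero_iff.mpr fun ⟨z, hz⟩ =>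
    (hα.natCast_mul hk).ne_int z hz.symm

theorem Irrational.fract_natCast_mul_injective {α : ℝ} (hα : Irrational α) :
    Function.Injective fun k : ℕ => fract (k * α) := by
  intro p q h
  obtain ⟨z, hz⟩ := fract_eq_fract.mp h
  by_contra hpq
  have hpq' : (p : ℤ) - q ≠ 0 := sub_ne_zero.mpr (mod_cast hpq)
  exact (hα.intCast_mul hpq').ne_int z (by push_cast; linarith)

theorem fract_natCast_add_mul_eq_or (p q : ℕ) (α : ℝ) :
    fract (((p + q : ℕ) : ℝ) * α) = fract (p * α) + fract (q * α) ∨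
      fract (((p + q : ℕ) : ℝ) * α) = fract (p * α) + fract (q * α) - 1 := by
  rw [Nat.cast_add, add_mul]
  exact fract_add_eq_or _ _

theorem fract_natCast_mul_sub_of_lt {m m' : ℕ} (h : m < m') (α : ℝ) :
    fract (m' * α - m * α) = fract ((m' - m : ℕ) * α) := by
  rw [Nat.cast_sub h.le, sub_mul]

theorem Irrational.fract_natCast_mul_sub_of_gt {α : ℝ} (hα : Irrational α) {m m' : ℕ}
    (h : m' < m) : fract (m' * α - m * α) = 1 - fract ((m - m' : ℕ) * α) := by
  rw [← fract_neg (hα.fract_natCast_mul_pos (Nat.sub_ne_zero_of_lt h)).ne', Nat.cast_sub h.le]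
  ring_nf

theorem gapAt_eq_of_forall_le_s3 {α c : ℝ} {N m : ℕ} (hα : Irrational α) (hc : 0 < c)
    (hwit : ∃ m' < N, fract (m' * α - m * α) = c)
    (hfwd : ∀ k, k ≠ 0 → m + k < N → c ≤ fract (k * α))
    (hbwd : ∀ k, k ≠ 0 → k ≤ m → c ≤ 1 - fract (k * α)) : gapAt α N m = c := by
  refine IsLeast.csInf_eq ⟨⟨hc, hwit⟩, ?_⟩
  rintro _ ⟨hd, m', hm', rfl⟩
  rcases lt_trichotomy m m' with h | rfl | h
  · rw [fract_natCast_mul_sub_of_lt h]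
    exact hfwd _ (by omega) (by omega)
  · simp at hd
  · rw [hα.fract_natCast_mul_sub_of_gt h]
    exact hbwd _ (by omega) (by omega)

section ThreeDistance

variable {α : ℝ} {N a b m : ℕ}

theorem gapAt_eq_of_add_lt (hα : Irrational α) (ha0 : a ≠ 0)
    (hmin : ∀ k, k ≠ 0 → k < N → fract (a * α) ≤ fract (k * α)) (hm : m + a < N) :
    gapAt α N m = fract (a * α) := by
  refine gapAt_eq_of_forall_le_s3 hα (hα.fract_natCast_mul_pos ha0) ⟨m + a, hm, ?_⟩
    (fun k hk hmk => hmin k hk (by omega)) fun k hk hkm => ?_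
  · rw [fract_natCast_mul_sub_of_lt (by omega), Nat.add_sub_cancel_left]
  · have hka := hmin (k + a) (by omega) (by omega)
    rcases fract_natCast_add_mul_eq_or k a α with h | h <;> rw [h] at hka
    · linarith [fract_lt_one (((k + a : ℕ) : ℝ) * α)]
    · linarith [fract_lt_one ((k : ℝ) * α)]

theorem gapAt_eq_of_le (hα : Irrational α) (hb0 : b ≠ 0)
    (hmax : ∀ k < N, fract (k * α) ≤ fract (b * α)) (hbm : b ≤ m) (hm : m < N) :
    gapAt α N m = 1 - fract (b * α) := by
  refine gapAt_eq_of_forall_le_s3 hα (by linarith [fract_lt_one ((b : ℝ) * α)])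
    ⟨m - b, by omega, ?_⟩ (fun k hk hmk => ?_) fun k hk hkm => by linarith [hmax k (by omega)]
  · rw [hα.fract_natCast_mul_sub_of_gt (by omega), Nat.sub_sub_self hbm]
  · have hkb := hmax (k + b) (by omega)
    rcases fract_natCast_add_mul_eq_or k b α with h | h <;> rw [h] at hkb
    · linarith [hα.fract_natCast_mul_pos hk]
    · linarith [fract_nonneg (((k + b : ℕ) : ℝ) * α)]

theorem gapAt_eq_of_lt_of_le (hα : Irrational α) (haN : a < N) (hbN : b < N) (hab : a ≠ b)
    (hmin : ∀ k, k ≠ 0 → k < N → fract (a * α) ≤ fract (k * α))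
    (hmax : ∀ k < N, fract (k * α) ≤ fract (b * α)) (hma : N ≤ m + a) (hmb : m < b) :
    gapAt α N m = fract (a * α) + (1 - fract (b * α)) := by
  have hfab : fract (a * α) < fract (b * α) :=
    (hmax a haN).lt_of_ne (hα.fract_natCast_mul_injective.ne hab)
  refine gapAt_eq_of_forall_le_s3 hα
    (by linarith [fract_nonneg ((a : ℝ) * α), fract_lt_one ((b : ℝ) * α)])
    ⟨m + a - b, by omega, ?_⟩ (fun k hk hmk => ?_) fun k hk hkm => ?_
  · rw [show ((m + a - b : ℕ) : ℝ) * α - m * α = a * α - b * α by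
      rw [Nat.cast_sub (by omega), Nat.cast_add]; ring, fract_sub_eq_of_lt hfab]
    ring
  · have hak := hmax (a - k) (by omega)
    have hka := hmin k hk (by omega)
    rcases fract_natCast_add_mul_eq_or (a - k) k α with h | h <;>
      rw [Nat.sub_add_cancel (by omega)] at h
    · linarith [hα.fract_natCast_mul_pos (show a - k ≠ 0 by omega)]
    · linarith
  · have hbk := hmin (b - k) (by omega) (by omega)
    have hkb := hmax k (by omega)
    rcases fract_natCast_add_mul_eq_or (b - k) k α with h | h <;>
      rw [Nat.sub_add_cancel (by omega)] at h
    · linarith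
    · linarith [fract_lt_one (((b - k : ℕ) : ℝ) * α)]

end ThreeDistance

section GapSet

variable {α : ℝ} {N a b : ℕ}

theorem fract_add_fract_ne_one (hα : Irrational α) {p q : ℕ} (hpq : p + q ≠ 0) :
    fract (p * α) + fract (q * α) ≠ 1 := by
  intro h
  rcases fract_natCast_add_mul_eq_or p q α with h' | h'
  · linarith [fract_lt_one (((p + q : ℕ) : ℝ) * α)]
  · linarith [hα.fract_natCast_mul_pos hpq]

theorem le_add_of_forall_fract_le (hα : Irrational α) (ha0 : a ≠ 0)
    (hmin : ∀ k, k ≠ 0 → k < N → fract (a * α) ≤ fract (k * α))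
    (hmax : ∀ k < N, fract (k * α) ≤ fract (b * α)) : N ≤ a + b := by
  by_contra! h
  rcases fract_natCast_add_mul_eq_or a b α with h' | h'
  · linarith [hmax (a + b) h, hα.fract_natCast_mul_pos ha0]
  · linarith [hmin (a + b) (by omega) h, fract_lt_one ((b : ℝ) * α)]

theorem gapAt_mem_gapSet {m : ℕ} (hm : m < N) : gapAt α N m ∈ gapSet α N :=
  Finset.mem_image_of_mem _ (Finset.mem_range.mpr hm)

theorem gapSet_eq_pair (hα : Irrational α) (ha0 : a ≠ 0) (hb0 : b ≠ 0)
    (hmin : ∀ k, k ≠ 0 → k < N → fract (a * α) ≤ fract (k * α))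
    (hmax : ∀ k < N, fract (k * α) ≤ fract (b * α)) (hN : N = a + b) :
    gapSet α N = {fract (a * α), 1 - fract (b * α)} := by
  ext x
  simp only [gapSet, Finset.mem_image, Finset.mem_range, Finset.mem_insert,
    Finset.mem_singleton]
  constructor
  · rintro ⟨m, hm, rfl⟩
    rcases lt_or_ge (m + a) N with h | h
    · exact .inl (gapAt_eq_of_add_lt hα ha0 hmin h)
    · exact .inr (gapAt_eq_of_le hα hb0 hmax (by omega) hm)
  · rintro (rfl | rfl)
    · exact ⟨0, by omega, gapAt_eq_of_add_lt hα ha0 hmin (by omega)⟩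
    · exact ⟨b, by omega, gapAt_eq_of_le hα hb0 hmax le_rfl (by omega)⟩

theorem card_gapSet_of_eq_add (hα : Irrational α) (ha0 : a ≠ 0) (hb0 : b ≠ 0)
    (hmin : ∀ k, k ≠ 0 → k < N → fract (a * α) ≤ fract (k * α))
    (hmax : ∀ k < N, fract (k * α) ≤ fract (b * α)) (hN : N = a + b) :
    (gapSet α N).card = 2 := by
  rw [gapSet_eq_pair hα ha0 hb0 hmin hmax hN, Finset.card_pair]
  intro h
  exact fract_add_fract_ne_one hα (by omega) (by linarith : fract (a * α) + fract (b * α) = 1)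

theorem three_le_card_gapSet_of_lt_add (hα : Irrational α) (ha0 : a ≠ 0) (hb0 : b ≠ 0)
    (haN : a < N) (hbN : b < N) (hab : a ≠ b)
    (hmin : ∀ k, k ≠ 0 → k < N → fract (a * α) ≤ fract (k * α))
    (hmax : ∀ k < N, fract (k * α) ≤ fract (b * α)) (hN : N < a + b) :
    3 ≤ (gapSet α N).card := by
  set δ₁ := fract (a * α)
  set δ₂ := 1 - fract (b * α)
  have hδ₁ : 0 < δ₁ := hα.fract_natCast_mul_pos ha0
  have hδ₂ : 0 < δ₂ := by linarith [fract_lt_one ((b : ℝ) * α)]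
  have hδ : δ₁ ≠ δ₂ := fun h =>
    fract_add_fract_ne_one hα (p := a) (q := b) (by omega) (by linarith)
  have hsub : {δ₁, δ₂, δ₁ + δ₂} ⊆ gapSet α N := by
    simp only [Finset.insert_subset_iff, Finset.singleton_subset_iff]
    refine ⟨?_, ?_, ?_⟩
    · simpa only [gapAt_eq_of_add_lt hα ha0 hmin (by omega : 0 + a < N)] using
        gapAt_mem_gapSet (α := α) (by omega : 0 < N)
    · simpa only [gapAt_eq_of_le hα hb0 hmax le_rfl hbN] using gapAt_mem_gapSet (α := α) hbN
    · simpa only [gapAt_eq_of_lt_of_le hα haN hbN hab hmin hmax (by omega : N ≤ N - a + a)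
        (by omega)] using gapAt_mem_gapSet (α := α) (by omega : N - a < N)
  calc 3 = ({δ₁, δ₂, δ₁ + δ₂} : Finset ℝ).card :=
        (Finset.card_eq_three.mpr ⟨_, _, _, hδ, by linarith, by linarith, rfl⟩).symm
    _ ≤ (gapSet α N).card := Finset.card_le_card hsub

end GapSet

section Ordering

variable {β : Type*} [LinearOrder β] {g : ℕ → β} {u : ℕ → ℕ} {N m : ℕ}

theorem apply_zero_eq_zero_of_strictMonoOn (hbij : Set.BijOn u (Set.Iio N) (Set.Iio N))
    (hmono : StrictMonoOn (fun j => g (u j)) (Set.Iio N)) (hg : ∀ k, g 0 ≤ g k) (hN : 0 < N) :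
    u 0 = 0 := by
  obtain ⟨j, hj, hj0⟩ := hbij.surjOn (Set.mem_Iio.mpr hN)
  rcases Nat.eq_zero_or_pos j with rfl | hjpos
  · exact hj0
  · have := hmono (Set.mem_Iio.mpr hN) hj hjpos
    simp only [hj0] at this
    exact absurd (hg (u 0)) this.not_ge

theorem apply_one_le_of_strictMonoOn (hbij : Set.BijOn u (Set.Iio N) (Set.Iio N))
    (hmono : StrictMonoOn (fun j => g (u j)) (Set.Iio N)) (hu0 : u 0 = 0) (hm0 : m ≠ 0)
    (hm : m < N) : g (u 1) ≤ g m := by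
  obtain ⟨j, hj, rfl⟩ := hbij.surjOn (Set.mem_Iio.mpr hm)
  have hj0 : j ≠ 0 := by rintro rfl; exact hm0 hu0
  have hjN : j < N := hj
  exact hmono.monotoneOn (Set.mem_Iio.mpr (by omega)) hj (by omega)

theorem le_apply_pred_of_strictMonoOn (hbij : Set.BijOn u (Set.Iio N) (Set.Iio N))
    (hmono : StrictMonoOn (fun j => g (u j)) (Set.Iio N)) (hm : m < N) :
    g m ≤ g (u (N - 1)) := by
  obtain ⟨j, hj, rfl⟩ := hbij.surjOn (Set.mem_Iio.mpr hm)
  have hjN : j < N := hj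
  exact hmono.monotoneOn hj (Set.mem_Iio.mpr (by omega)) (by omega)

end Ordering

theorem relabeling_iff (α : ℝ) (hα : Irrational α) (N : ℕ) (hN : 2 ≤ N)
    (u : ℕ → ℕ) (hbij : Set.BijOn u (Set.Iio N) (Set.Iio N))
    (hmono : StrictMonoOn (fun j => Int.fract ((u j : ℝ) * α)) (Set.Iio N)) :
    (gapSet α N).card = 2 ↔ N = u 1 + u (N - 1) := by
  set g : ℕ → ℝ := fun k => fract (k * α)
  have hu0 : u 0 = 0 :=
    apply_zero_eq_zero_of_strictMonoOn (g := g) hbij hmono (by simp [g, fract_nonneg]) (by omega)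
  have hmin : ∀ k, k ≠ 0 → k < N → fract (u 1 * α) ≤ fract (k * α) := fun k =>
    apply_one_le_of_strictMonoOn (g := g) hbij hmono hu0
  have hmax : ∀ k < N, fract (k * α) ≤ fract (u (N - 1) * α) := fun k =>
    le_apply_pred_of_strictMonoOn (g := g) hbij hmono
  have hu_ne {i j : ℕ} (hi : i < N) (hj : j < N) (h : i ≠ j) : u i ≠ u j :=
    (hbij.injOn.ne_iff hi hj).mpr h
  have haN : u 1 < N := hbij.mapsTo (show 1 < N by omega)
  have hbN : u (N - 1) < N := hbij.mapsTo (show N - 1 < N by omega)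
  have ha0 : u 1 ≠ 0 := hu0 ▸ hu_ne (by omega) (by omega) one_ne_zero
  have hb0 : u (N - 1) ≠ 0 := hu0 ▸ hu_ne (by omega) (by omega) (by omega)
  refine ⟨fun hcard => ?_, card_gapSet_of_eq_add hα ha0 hb0 hmin hmax⟩
  by_contra hne
  have hlt := (le_add_of_forall_fract_le hα ha0 hmin hmax).lt_of_ne hne
  have hN2 : N ≠ 2 := by rintro rfl; omega
  have hab : u 1 ≠ u (N - 1) := hu_ne (by omega) (by omega) (by omega)
  have := three_le_card_gapSet_of_lt_add hα ha0 hb0 haN hbN hab hmin hmax hlt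
  omega
end

section
/- At a relabeling time N, if J is the index with u_J = N-1, then the gap letters satisfy W_{J-1} ≠ W_J; i.e., the two gaps adjacent on the left of the point {(N-1)α} form one short gap and one long gap in some order. -/
namespace Int

variable {R : Type*} [CommRing R] [LinearOrder R] [IsStrictOrderedRing R] [FloorRing R] {a b : R}

theorem fract_sub_eq_of_fract_le (h : fract b ≤ fract a) : fract (a - b) = fract a - fract b := by
  rw [fract_eq_iff]
  refine ⟨sub_nonneg.2 h, by linarith [fract_lt_one a, fract_nonneg b], ⌊a⌋ - ⌊b⌋, ?_⟩
  push_cast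
  rw [← self_sub_fract a, ← self_sub_fract b]
  ring

theorem fract_sub_eq_of_fract_lt (h : fract a < fract b) :
    fract (a - b) = fract a - fract b + 1 := by
  rw [fract_eq_iff]
  refine ⟨by linarith [fract_lt_one b, fract_nonneg a], by linarith, ⌊a⌋ - ⌊b⌋ - 1, ?_⟩
  push_cast
  rw [← self_sub_fract a, ← self_sub_fract b]
  ring

theorem toNat_emod_lt {N : ℕ} (hN : 0 < N) (j : ℤ) : (j % N).toNat < N := by
  have := emod_lt_of_pos j (by omega : (0 : ℤ) < N)
  omega

theorem toNat_emod_sub_one_add_one_mod {N J : ℕ} (hJ : J < N) :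
    ((((J : ℤ) - 1) % N).toNat + 1) % N = J := by
  have hnn := emod_nonneg ((J : ℤ) - 1) (by omega : (N : ℤ) ≠ 0)
  zify
  rw [toNat_of_nonneg hnn, emod_add_emod, sub_add_cancel, emod_eq_of_lt (by omega) (by omega)]

end Int

theorem Nat.add_one_mod_ne_self {N : ℕ} (hN : 2 ≤ N) (j : ℕ) : (j + 1) % N ≠ j := by
  intro h
  have hj : j < N := h ▸ Nat.mod_lt _ (by omega)
  rcases (Nat.succ_le_of_lt hj).lt_or_eq with hlt | heq
  · rw [Nat.mod_eq_of_lt hlt] at h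
    omega
  · rw [show j + 1 = N from heq, Nat.mod_self] at h
    omega

namespace Irrational

variable {α : ℝ}

theorem sub_eq_of_fract_eq (hα : Irrational α) {a b c d : ℕ}
    (h : Int.fract ((a : ℝ) * α - b * α) = Int.fract ((c : ℝ) * α - d * α)) :
    (a : ℤ) - b = c - d := by
  obtain ⟨z, hz⟩ := Int.fract_eq_fract.1 h
  by_contra hne
  refine (hα.intCast_mul (sub_ne_zero.2 hne)).ne_int z ?_
  push_cast
  linarith

theorem fract_natCast_mul_sub_pos (hα : Irrational α) {m m' : ℕ} (h : m' ≠ m) :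
    0 < Int.fract ((m' : ℝ) * α - m * α) := by
  refine (Int.fract_nonneg _).lt_of_ne' fun h0 => h ?_
  have := hα.sub_eq_of_fract_eq (a := m') (b := m) (c := m) (d := m) (by simpa using h0)
  omega

end Irrational

theorem gapAt_eq_of_forall_le_s9 {α : ℝ} {N m m' : ℕ} (hm' : m' < N)
    (hpos : 0 < Int.fract ((m' : ℝ) * α - m * α))
    (hmin : ∀ k < N, 0 < Int.fract ((k : ℝ) * α - m * α) →
      Int.fract ((m' : ℝ) * α - m * α) ≤ Int.fract ((k : ℝ) * α - m * α)) :
    gapAt α N m = Int.fract ((m' : ℝ) * α - m * α) :=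
  IsLeast.csInf_eq ⟨⟨hpos, m', hm', rfl⟩, by rintro _ ⟨hd, k, hk, rfl⟩; exact hmin k hk hd⟩

section Ordered

variable {α : ℝ} {N : ℕ} {u : ℕ → ℕ}

theorem fract_sub_succ_le_of_strictMonoOn
    (hmono : StrictMonoOn (fun j => Int.fract ((u j : ℝ) * α)) (Set.Iio N))
    {j k : ℕ} (hj : j < N) (hk : k < N) (hkj : k ≠ j) :
    Int.fract ((u ((j + 1) % N) : ℝ) * α - u j * α) ≤ Int.fract ((u k : ℝ) * α - u j * α) := by
  have hle : ∀ {i i'}, i' < N → i ≤ i' →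
      Int.fract ((u i : ℝ) * α) ≤ Int.fract ((u i' : ℝ) * α) := fun hi' hii' =>
    hmono.monotoneOn (lt_of_le_of_lt hii' hi') hi' hii'
  rcases (Nat.succ_le_of_lt hj).lt_or_eq with hsucc | hsucc
  · rw [Nat.mod_eq_of_lt hsucc, Int.fract_sub_eq_of_fract_le (hle hsucc j.le_succ)]
    rcases hkj.lt_or_gt with hkj | hjk
    · rw [Int.fract_sub_eq_of_fract_lt (hmono hk hj hkj)]
      linarith [Int.fract_lt_one ((u (j + 1) : ℝ) * α), Int.fract_nonneg ((u k : ℝ) * α)]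
    · rw [Int.fract_sub_eq_of_fract_le (hle hk hjk.le)]
      linarith [hle hk hjk]
  · have hkj : k < j := by omega
    rw [← hsucc, Nat.mod_self,
      Int.fract_sub_eq_of_fract_lt (hmono (show 0 < N by omega) hj (by omega)),
      Int.fract_sub_eq_of_fract_lt (hmono hk hj hkj)]
    linarith [hle hk k.zero_le]

theorem gapAt_eq_fract_succ (hα : Irrational α) (hN : 2 ≤ N)
    (hbij : Set.BijOn u (Set.Iio N) (Set.Iio N))
    (hmono : StrictMonoOn (fun j => Int.fract ((u j : ℝ) * α)) (Set.Iio N))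
    {j : ℕ} (hj : j < N) :
    gapAt α N (u j) = Int.fract ((u ((j + 1) % N) : ℝ) * α - u j * α) := by
  have hsucc : (j + 1) % N < N := Nat.mod_lt _ (by omega)
  have hne : u ((j + 1) % N) ≠ u j := fun h =>
    Nat.add_one_mod_ne_self hN j (hbij.injOn hsucc hj h)
  refine gapAt_eq_of_forall_le_s9 (hbij.mapsTo hsucc) (hα.fract_natCast_mul_sub_pos hne) ?_
  intro m hm hpos
  obtain ⟨k, hk, rfl⟩ := hbij.surjOn hm
  refine fract_sub_succ_le_of_strictMonoOn hmono hj hk ?_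
  rintro rfl
  simp at hpos

end Ordered

theorem adjacent_gaps_differ_general (α : ℝ) (hα : Irrational α) (N : ℕ) (hN : 2 ≤ N)
    (u : ℕ → ℕ) (hbij : Set.BijOn u (Set.Iio N) (Set.Iio N))
    (hmono : StrictMonoOn (fun j => Int.fract ((u j : ℝ) * α)) (Set.Iio N))
    (J : ℕ) (hJ : J < N) (hJval : u J = N - 1) :
    gapAt α N (uc N u ((J : ℤ) - 1)) ≠ gapAt α N (u J) := by
  set p := (((J : ℤ) - 1) % N).toNat
  have hp : p < N := Int.toNat_emod_lt (by omega) _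
  have hpJ : (p + 1) % N = J := Int.toNat_emod_sub_one_add_one_mod hJ
  have hs : (J + 1) % N < N := Nat.mod_lt _ (by omega)
  have hup : u p ≠ u J := fun h =>
    Nat.add_one_mod_ne_self hN p (hpJ.trans (hbij.injOn hp hJ h).symm)
  have hus : u ((J + 1) % N) ≠ u J := fun h =>
    Nat.add_one_mod_ne_self hN J (hbij.injOn hs hJ h)
  have hupN : u p < N := hbij.mapsTo hp
  have husN : u ((J + 1) % N) < N := hbij.mapsTo hs
  rw [uc, gapAt_eq_fract_succ hα hN hbij hmono hp, hpJ, gapAt_eq_fract_succ hα hN hbij hmono hJ]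
  intro h
  have := hα.sub_eq_of_fract_eq h
  omega

theorem adjacent_gaps_differ (α : ℝ) (hα : Irrational α) (N : ℕ) (hN : 2 ≤ N)
    (u : ℕ → ℕ) (hbij : Set.BijOn u (Set.Iio N) (Set.Iio N))
    (hmono : StrictMonoOn (fun j => Int.fract ((u j : ℝ) * α)) (Set.Iio N))
    (hrel : (gapSet α N).card = 2)
    (J : ℕ) (hJ : J < N) (hJval : u J = N - 1) :
    gapAt α N (uc N u ((J : ℤ) - 1)) ≠ gapAt α N (u J) :=
  adjacent_gaps_differ_general α hα N hN u hbij hmono J hJ hJval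
end
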